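/- arXiv:2105.08333 — 4 statements merged into one kernel-verified Lean document; each statement's English description precedes it below -/
import Mathlib

section
/- Let T > 0, let X : [0,T] → [0,∞) be continuous with X² differentiable on [0,T], let B ≥ 0 be a constant, and let A : [0,T] → [0,∞) be a measurable, integrable function such that (1/2)(X²)′(t) + B X²(t) ≤ A(t) X(t) for almost every t ∈ [0,T]. Then for all t ∈ [0,T] one has X(t) + B ∫₀ᵗ X(τ) dτ ≤ X(0) + ∫₀ᵗ A(τ) dτ. -/
/-!
Regularize `X` by `Y = √(X² + η²)`, which is differentiable wherever `X²` is, with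
`Y' = (X²)' / (2Y)`. Since `X ≤ Y ≤ X + η`, the hypothesis gives `Y' ≤ A - B X + B η` almost
everywhere, so integrating yields the claim up to an error `η (1 + B t)`; then let `η → 0`.
-/

open MeasureTheory Set

theorem sub_le_integral_of_hasDerivAt_of_ae_le {f f' φ : ℝ → ℝ} {a b : ℝ} (hab : a ≤ b)
    (hf : ContinuousOn f (Icc a b)) (hderiv : ∀ x ∈ Ioo a b, HasDerivAt f (f' x) x)
    (hφ : IntegrableOn φ (Icc a b)) (hle : ∀ᵐ x ∂volume.restrict (Icc a b), f' x ≤ φ x) :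
    f b - f a ≤ ∫ x in a..b, φ x := by
  -- `max φ f'` is an everywhere upper bound for `f'` that agrees with `φ` almost everywhere.
  have hmax : (fun x => max (φ x) (f' x)) =ᵐ[volume.restrict (Icc a b)] φ := by
    filter_upwards [hle] with x hx using max_eq_left hx
  calc f b - f a ≤ ∫ x in a..b, max (φ x) (f' x) :=
        intervalIntegral.sub_le_integral_of_hasDeriv_right_of_le hab hf
          (fun x hx => (hderiv x hx).hasDerivWithinAt) (hφ.congr_fun_ae hmax.symm)
          (fun x _ => le_max_right _ _)
    _ = ∫ x in a..b, φ x := by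
        rw [intervalIntegral.integral_of_le hab, intervalIntegral.integral_of_le hab]
        exact integral_congr_ae (ae_restrict_of_ae_restrict_of_subset Ioc_subset_Icc_self hmax)

theorem le_sqrt_sq_add_sq (x η : ℝ) : x ≤ √(x ^ 2 + η ^ 2) :=
  Real.le_sqrt_of_sq_le (le_add_of_nonneg_right (sq_nonneg η))

theorem sqrt_sq_add_sq_le_add {x η : ℝ} (hx : 0 ≤ x) (hη : 0 ≤ η) : √(x ^ 2 + η ^ 2) ≤ x + η :=
  Real.sqrt_le_iff.2 ⟨by positivity, by nlinarith⟩

theorem div_two_sqrt_sq_add_sq_le {x η a B d : ℝ} (hx : 0 ≤ x) (hη : 0 < η) (ha : 0 ≤ a)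
    (hB : 0 ≤ B) (h : 1 / 2 * d + B * x ^ 2 ≤ a * x) :
    d / (2 * √(x ^ 2 + η ^ 2)) ≤ a - B * x + B * η := by
  set y := √(x ^ 2 + η ^ 2)
  have hxy : x ≤ y := le_sqrt_sq_add_sq _ η
  have hyx : y ≤ x + η := sqrt_sq_add_sq_le_add hx hη.le
  have hy : 0 < y := Real.sqrt_pos.2 (by positivity)
  rw [div_le_iff₀ (by positivity)]
  nlinarith [mul_nonneg ha (sub_nonneg.2 hxy), mul_nonneg hB (mul_nonneg hx (sub_nonneg.2 hyx)),
    mul_nonneg (mul_nonneg hB hη.le) (sub_nonneg.2 hxy)]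

section Gronwall

variable {a b B : ℝ} {X A D : ℝ → ℝ}

theorem add_mul_integral_le_add_integral_add (hab : a ≤ b)
    (hXcont : ContinuousOn X (Icc a b)) (hXnonneg : ∀ t ∈ Icc a b, 0 ≤ X t)
    (hXder : ∀ t ∈ Ioo a b, HasDerivAt (fun s => X s ^ 2) (D t) t)
    (hB : 0 ≤ B) (hAint : IntegrableOn A (Icc a b)) (hAnonneg : ∀ t ∈ Icc a b, 0 ≤ A t)
    (hineq : ∀ᵐ t ∂volume.restrict (Icc a b), 1 / 2 * D t + B * X t ^ 2 ≤ A t * X t)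
    {η : ℝ} (hη : 0 < η) :
    X b + B * ∫ t in a..b, X t ≤ X a + (∫ t in a..b, A t) + η * (1 + B * (b - a)) := by
  set Y : ℝ → ℝ := fun s => √(X s ^ 2 + η ^ 2)
  have hYcont : ContinuousOn Y (Icc a b) :=
    Real.continuous_sqrt.comp_continuousOn ((hXcont.pow 2).add continuousOn_const)
  have hYder : ∀ t ∈ Ioo a b, HasDerivAt Y (D t / (2 * Y t)) t := fun t ht =>
    ((hXder t ht).add_const _).sqrt (by positivity)
  have hXint : IntegrableOn X (Icc a b) := hXcont.integrableOn_compact isCompact_Icc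
  have hAi : IntervalIntegrable A volume a b :=
    (intervalIntegrable_iff_integrableOn_Icc_of_le hab).2 hAint
  have hXi : IntervalIntegrable X volume a b :=
    (intervalIntegrable_iff_integrableOn_Icc_of_le hab).2 hXint
  have hYle : Y b - Y a ≤ ∫ t in a..b, (A t - B * X t + B * η) := by
    refine sub_le_integral_of_hasDerivAt_of_ae_le hab hYcont hYder
      ((hAint.sub (hXint.const_mul B)).add (integrableOn_const measure_Icc_lt_top.ne)) ?_
    filter_upwards [hineq, ae_restrict_mem measurableSet_Icc] with t h ht
    exact div_two_sqrt_sq_add_sq_le (hXnonneg t ht) hη (hAnonneg t ht) hB h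
  rw [intervalIntegral.integral_add (hAi.sub (hXi.const_mul B)) intervalIntegrable_const,
    intervalIntegral.integral_sub hAi (hXi.const_mul B), intervalIntegral.integral_const_mul,
    intervalIntegral.integral_const, smul_eq_mul] at hYle
  have hXY : X b ≤ Y b := le_sqrt_sq_add_sq _ η
  have hYX : Y a ≤ X a + η := sqrt_sq_add_sq_le_add (hXnonneg a ⟨le_rfl, hab⟩) hη.le
  linarith

theorem add_mul_integral_le_add_integral (hab : a ≤ b)
    (hXcont : ContinuousOn X (Icc a b)) (hXnonneg : ∀ t ∈ Icc a b, 0 ≤ X t)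
    (hXder : ∀ t ∈ Ioo a b, HasDerivAt (fun s => X s ^ 2) (D t) t)
    (hB : 0 ≤ B) (hAint : IntegrableOn A (Icc a b)) (hAnonneg : ∀ t ∈ Icc a b, 0 ≤ A t)
    (hineq : ∀ᵐ t ∂volume.restrict (Icc a b), 1 / 2 * D t + B * X t ^ 2 ≤ A t * X t) :
    X b + B * ∫ t in a..b, X t ≤ X a + ∫ t in a..b, A t := by
  refine le_of_forall_pos_le_add fun δ hδ => ?_
  have hC : 0 < 1 + B * (b - a) := by nlinarith
  have := add_mul_integral_le_add_integral_add hab hXcont hXnonneg hXder hB hAint hAnonneg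
    hineq (div_pos hδ hC)
  rwa [div_mul_cancel₀ _ hC.ne'] at this

end Gronwall

theorem stmt2_general (T : ℝ) (X A D : ℝ → ℝ)
    (hXcont : ContinuousOn X (Icc 0 T))
    (hXnonneg : ∀ t ∈ Icc (0 : ℝ) T, 0 ≤ X t)
    (hXder : ∀ t ∈ Icc (0 : ℝ) T,
      HasDerivWithinAt (fun s => X s ^ 2) (D t) (Icc 0 T) t)
    (B : ℝ) (hB : 0 ≤ B)
    (hAint : IntegrableOn A (Icc 0 T))
    (hAnonneg : ∀ t ∈ Icc (0 : ℝ) T, 0 ≤ A t)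
    (hineq : ∀ᵐ t ∂(volume.restrict (Icc (0 : ℝ) T)),
      (1 / 2) * D t + B * X t ^ 2 ≤ A t * X t) :
    ∀ t ∈ Icc (0 : ℝ) T,
      X t + B * ∫ τ in (0 : ℝ)..t, X τ ≤ X 0 + ∫ τ in (0 : ℝ)..t, A τ := by
  intro t ht
  have hsub : Icc 0 t ⊆ Icc 0 T := Icc_subset_Icc_right ht.2
  refine add_mul_integral_le_add_integral ht.1 (hXcont.mono hsub)
    (fun s hs => hXnonneg s (hsub hs)) (fun s hs => ?_) hB (hAint.mono_set hsub)
    (fun s hs => hAnonneg s (hsub hs)) (ae_restrict_of_ae_restrict_of_subset hsub hineq)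
  exact (hXder s (Ioo_subset_Icc_self (Ioo_subset_Ioo_right ht.2 hs))).hasDerivAt
    (Icc_mem_nhds hs.1 (hs.2.trans_le ht.2))

/-- Lemma "SimpliCarre": if `X ≥ 0` is continuous on `[0,T]`, `X²` is differentiable there
with derivative `D`, and `(1/2) D + B X² ≤ A X` a.e. on `[0,T]` for some `B ≥ 0` and a
nonnegative measurable integrable `A`, then
`X t + B ∫₀ᵗ X ≤ X 0 + ∫₀ᵗ A` for all `t ∈ [0,T]`. -/
theorem stmt2 (T : ℝ) (hT : 0 < T) (X A D : ℝ → ℝ)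
    (hXcont : ContinuousOn X (Icc 0 T))
    (hXnonneg : ∀ t ∈ Icc (0 : ℝ) T, 0 ≤ X t)
    (hXder : ∀ t ∈ Icc (0 : ℝ) T,
      HasDerivWithinAt (fun s => X s ^ 2) (D t) (Icc 0 T) t)
    (B : ℝ) (hB : 0 ≤ B)
    (hAmeas : Measurable A)
    (hAint : IntegrableOn A (Icc 0 T))
    (hAnonneg : ∀ t ∈ Icc (0 : ℝ) T, 0 ≤ A t)
    (hineq : ∀ᵐ t ∂(volume.restrict (Icc (0 : ℝ) T)),
      (1 / 2) * D t + B * X t ^ 2 ≤ A t * X t) :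
    ∀ t ∈ Icc (0 : ℝ) T,
      X t + B * ∫ τ in (0 : ℝ)..t, X τ ≤ X 0 + ∫ τ in (0 : ℝ)..t, A τ :=
  stmt2_general T X A D hXcont hXnonneg hXder B hB hAint hAnonneg hineq
end

section
/- Let d ≥ 1 and n ≥ 1. Let Ā⁰ be a symmetric positive definite n×n real matrix, let Ā¹, …, Ā^d be symmetric n×n real matrices, let N be an n×n real matrix, and fix positive reals ε₀, …, ε_{n−1}. For ω in the unit sphere S^{d−1} of ℝ^d set M_ω := (Ā⁰)⁻¹ Σ_{j=1}^d ω_j Ā^j. Then the infimum N̄ := inf{ Σ_{k=0}^{n−1} ε_k |N M_ω^k x|² : x ∈ S^{n−1}, ω ∈ S^{d−1} } is strictly positive if and only if for every ω ∈ S^{d−1}, every φ ∈ ℝⁿ and every λ ∈ ℝ satisfying Nφ = 0 and λφ + M_ω φ = 0, one has φ = 0. -/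
/-!
If the Shizuta–Kawashima condition fails at `ω`, a normalized eigenvector of `M_ω` lying in
`ker N` annihilates every `N M_ω^k`, so `0` belongs to the set. Conversely, the functional
`∑ ε_k |N M_ω^k x|²` is continuous on the compact product of spheres, so the infimum is attained.
If it vanished at `(x, ω)`, then `N M_ω^k x = 0` for `k < n`, hence for all `k` by
Cayley–Hamilton, and `x` lies in the `M_ω`-invariant subspace `⋂_k ker (N M_ω^k) ⊆ ker N`.
Writing `Ā⁰ = Cᴴ C`, conjugation by `C` turns `M_ω` into the Hermitian matrix
`C⁻ᴴ (∑ ω_j Ā^j) C⁻¹`, whose restriction to that invariant subspace has an eigenvector: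
this contradicts the Shizuta–Kawashima condition.
-/

open Module Matrix WithLp Polynomial

noncomputable def eNorm {n : ℕ} (x : Fin n → ℝ) : ℝ := Real.sqrt (∑ i, (x i) ^ 2)

theorem Module.End.apply_pow_apply_eq_zero_of_forall_lt_finrank {K V W : Type*} [Field K]
    [AddCommGroup V] [Module K V] [FiniteDimensional K V] [AddCommGroup W] [Module K W]
    (f : Module.End K V) (L : V →ₗ[K] W) {x : V}
    (h : ∀ k < finrank K V, L ((f ^ k) x) = 0) (k : ℕ) : L ((f ^ k) x) = 0 := by
  rcases (finrank K V).eq_zero_or_pos with h0 | hpos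
  · have : Subsingleton V := finrank_zero_iff.1 h0
    rw [Subsingleton.elim ((f ^ k) x) 0, map_zero]
  have hdeg : (X ^ k %ₘ f.charpoly).natDegree < finrank K V := by
    rw [← f.charpoly_natDegree]
    refine natDegree_modByMonic_lt _ f.charpoly_monic fun h1 => ?_
    have := f.charpoly_natDegree
    rw [h1, natDegree_one] at this
    omega
  rw [f.pow_eq_aeval_mod_charpoly, aeval_eq_sum_range' hdeg, LinearMap.sum_apply, map_sum]
  refine Finset.sum_eq_zero fun i hi => ?_
  rw [LinearMap.smul_apply, map_smul, h i (Finset.mem_range.1 hi), smul_zero]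

theorem LinearMap.IsSymmetric.exists_hasEigenvector_mem_ker {𝕜 E F : Type*} [RCLike 𝕜]
    [NormedAddCommGroup E] [InnerProductSpace 𝕜 E] [FiniteDimensional 𝕜 E]
    [AddCommGroup F] [Module 𝕜 F] {T : E →ₗ[𝕜] E} (hT : T.IsSymmetric) (L : E →ₗ[𝕜] F)
    {x : E} (hx : x ≠ 0) (h : ∀ k, L ((T ^ k) x) = 0) :
    ∃ μ v, Module.End.HasEigenvector T μ v ∧ L v = 0 := by
  set W : Submodule 𝕜 E := ⨅ k : ℕ, LinearMap.ker (L ∘ₗ T ^ k)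
  have hW : ∀ v ∈ W, T v ∈ W := by
    simp only [W, Submodule.mem_iInf, LinearMap.mem_ker, LinearMap.comp_apply]
    intro v hv k
    rw [← Module.End.mul_apply, ← pow_succ]
    exact hv (k + 1)
  have hxW : x ∈ W := Submodule.mem_iInf _ |>.2 fun k => h k
  have : Nontrivial W := nontrivial_of_ne ⟨x, hxW⟩ 0 (by simpa using hx)
  obtain ⟨μ, hμ⟩ : ∃ μ, Module.End.HasEigenvalue (T.restrict hW) μ :=
    ⟨_, (hT.restrict_invariant hW).hasEigenvalue_iSup_of_finiteDimensional⟩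
  obtain ⟨v, hv⟩ := hμ.exists_hasEigenvector
  refine ⟨μ, v, ⟨?_, by simpa using hv.2⟩, by simpa using (Submodule.mem_iInf _).1 v.2 0⟩
  simpa [Module.End.mem_eigenspace_iff, Subtype.ext_iff] using hv.apply_eq_smul

theorem Matrix.IsHermitian.exists_eigenvector_mem_ker {𝕜 l m : Type*} [RCLike 𝕜] [Fintype l]
    [Fintype m] [DecidableEq m] {S : Matrix m m 𝕜} (hS : S.IsHermitian) (N : Matrix l m 𝕜)
    {y : m → 𝕜} (hy : y ≠ 0) (h : ∀ k < Fintype.card m, N *ᵥ (S ^ k *ᵥ y) = 0) :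
    ∃ (μ : 𝕜) (ψ : m → 𝕜), ψ ≠ 0 ∧ S *ᵥ ψ = μ • ψ ∧ N *ᵥ ψ = 0 := by
  have hpow (k : ℕ) : toEuclideanLin N ((toEuclideanLin S ^ k) (toLp 2 y))
      = toLp 2 (N *ᵥ (S ^ k *ᵥ y)) := by
    rw [← toLpLin_pow]; rfl
  obtain ⟨μ, v, hv, hNv⟩ :=
    (isSymmetric_toEuclideanLin_iff.2 hS).exists_hasEigenvector_mem_ker (toEuclideanLin N)
      (x := toLp 2 y) (by simpa using hy) <|
    Module.End.apply_pow_apply_eq_zero_of_forall_lt_finrank _ _ fun k hk => by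
      rw [hpow, h k (by simpa using hk), toLp_zero]
  refine ⟨μ, ofLp v, by simpa using hv.2, congrArg ofLp hv.apply_eq_smul, congrArg ofLp hNv⟩

open scoped MatrixOrder ComplexOrder in
theorem Matrix.PosDef.exists_isUnit_eq_conjTranspose_mul_self {𝕜 m : Type*} [RCLike 𝕜]
    [Fintype m] [DecidableEq m] {A : Matrix m m 𝕜} (hA : A.PosDef) :
    ∃ C : Matrix m m 𝕜, IsUnit C ∧ A = Cᴴ * C := by
  refine ⟨CFC.sqrt A, (CFC.isUnit_sqrt_iff A hA.posSemidef.nonneg).2 hA.isUnit, ?_⟩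
  rw [(nonneg_iff_posSemidef.1 (CFC.sqrt_nonneg A)).isHermitian.eq, CFC.sqrt_mul_sqrt_self A]

open scoped ComplexOrder in
theorem Matrix.PosDef.exists_eigenvector_inv_mul_mem_ker {𝕜 l m : Type*} [RCLike 𝕜] [Fintype l]
    [Fintype m] [DecidableEq m] {A B : Matrix m m 𝕜} (hA : A.PosDef) (hB : B.IsHermitian)
    (N : Matrix l m 𝕜) {x : m → 𝕜} (hx : x ≠ 0)
    (h : ∀ k < Fintype.card m, N *ᵥ ((A⁻¹ * B) ^ k *ᵥ x) = 0) :
    ∃ (μ : 𝕜) (φ : m → 𝕜), φ ≠ 0 ∧ (A⁻¹ * B) *ᵥ φ = μ • φ ∧ N *ᵥ φ = 0 := by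
  obtain ⟨C, hC, rfl⟩ := hA.exists_isUnit_eq_conjTranspose_mul_self
  have hCdet : IsUnit C.det := (isUnit_iff_isUnit_det C).1 hC
  set S := (C⁻¹)ᴴ * B * C⁻¹
  have hCS : SemiconjBy C ((Cᴴ * C)⁻¹ * B) S := by
    simp only [SemiconjBy, S, Matrix.mul_inv_rev, conjTranspose_nonsing_inv, Matrix.mul_assoc,
      mul_nonsing_inv_cancel_left _ _ hCdet, nonsing_inv_mul _ hCdet, Matrix.mul_one]
  have hCinj : Function.Injective (C *ᵥ ·) := mulVec_injective_iff_isUnit.2 hC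
  have hCψ (ψ : m → 𝕜) : C *ᵥ (C⁻¹ *ᵥ ψ) = ψ := by
    rw [mulVec_mulVec, mul_nonsing_inv _ hCdet, one_mulVec]
  have hS : S.IsHermitian := isHermitian_conjTranspose_mul_mul C⁻¹ hB
  have hCx : C *ᵥ x ≠ 0 := fun h0 => hx (hCinj (h0.trans (mulVec_zero C).symm))
  have hNS : ∀ k < Fintype.card m, (N * C⁻¹) *ᵥ (S ^ k *ᵥ (C *ᵥ x)) = 0 := fun k hk => by
    rw [mulVec_mulVec, mulVec_mulVec, Matrix.mul_assoc (N * C⁻¹), ← (hCS.pow_right k).eq,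
      Matrix.mul_assoc, nonsing_inv_mul_cancel_left _ _ hCdet, ← mulVec_mulVec, h k hk]
  obtain ⟨μ, ψ, hψ, hSψ, hNψ⟩ := hS.exists_eigenvector_mem_ker (N * C⁻¹) hCx hNS
  refine ⟨μ, C⁻¹ *ᵥ ψ, fun h0 => hψ (by rw [← hCψ ψ, h0, mulVec_zero]), hCinj ?_,
    by rwa [mulVec_mulVec]⟩
  change C *ᵥ (((Cᴴ * C)⁻¹ * B) *ᵥ (C⁻¹ *ᵥ ψ)) = C *ᵥ (μ • (C⁻¹ *ᵥ ψ))
  rw [mulVec_mulVec, hCS.eq, ← mulVec_mulVec, hCψ, hSψ, mulVec_smul, hCψ]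

theorem Matrix.pow_mulVec_eq_pow_smul {m R : Type*} [Fintype m] [DecidableEq m] [CommRing R]
    {M : Matrix m m R} {v : m → R} {μ : R} (h : M *ᵥ v = μ • v) (k : ℕ) :
    M ^ k *ᵥ v = μ ^ k • v := by
  induction k with
  | zero => simp
  | succ k ih => rw [pow_succ', ← mulVec_mulVec, ih, mulVec_smul, h, smul_smul, ← pow_succ]

theorem IsCompact.lt_csInf_image {X : Type*} [TopologicalSpace X] {K : Set X} {f : X → ℝ}
    (hK : IsCompact K) (hne : K.Nonempty) (hf : ContinuousOn f K) {a : ℝ}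
    (ha : ∀ x ∈ K, a < f x) : a < sInf (f '' K) := by
  obtain ⟨x, hxK, hx⟩ := (hK.image_of_continuousOn hf).sInf_mem (hne.image f)
  exact hx ▸ ha x hxK

theorem isCompact_setOf_sum_sq_eq_one (m : Type*) [Fintype m] :
    IsCompact {x : m → ℝ | ∑ i, x i ^ 2 = 1} := by
  have := (isCompact_sphere (0 : EuclideanSpace ℝ m) 1).image (PiLp.continuous_ofLp 2 _)
  rw [EuclideanSpace.sphere_zero_eq 1 zero_le_one] at this
  convert this using 1
  ext x
  exact ⟨fun hx => ⟨toLp 2 x, by simpa using hx, rfl⟩, by rintro ⟨y, hy, rfl⟩; simpa using hy⟩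

theorem nonempty_setOf_sum_sq_eq_one (m : Type*) [Fintype m] [DecidableEq m] [Nonempty m] :
    {x : m → ℝ | ∑ i, x i ^ 2 = 1}.Nonempty :=
  ⟨Pi.single (Classical.arbitrary m) 1, by simp [Pi.single_apply, sq]⟩

theorem exists_smul_sum_sq_eq_one {m : Type*} [Fintype m] {x : m → ℝ} (hx : x ≠ 0) :
    ∃ c : ℝ, ∑ i, (c • x) i ^ 2 = 1 := by
  obtain ⟨i, hi⟩ := Function.ne_iff.1 hx
  have hs : 0 < ∑ i, x i ^ 2 :=
    Finset.sum_pos' (fun _ _ => sq_nonneg _) ⟨i, Finset.mem_univ _, pow_two_pos_of_ne_zero hi⟩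
  refine ⟨(√(∑ i, x i ^ 2))⁻¹, ?_⟩
  simp only [Pi.smul_apply, smul_eq_mul, mul_pow, ← Finset.mul_sum, inv_pow,
    Real.sq_sqrt hs.le, inv_mul_cancel₀ hs.ne']

theorem eNorm_eq_norm {n : ℕ} (x : Fin n → ℝ) : eNorm x = ‖toLp 2 x‖ := by
  simp [eNorm, EuclideanSpace.norm_eq]

@[fun_prop]
theorem continuous_eNorm {n : ℕ} : Continuous (eNorm (n := n)) := by
  unfold eNorm; fun_prop

noncomputable def krylovEnergy {n : ℕ} (ε : Fin n → ℝ) (N M : Matrix (Fin n) (Fin n) ℝ)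
    (x : Fin n → ℝ) : ℝ :=
  ∑ k : Fin n, ε k * eNorm ((N * M ^ (k : ℕ)) *ᵥ x) ^ 2

theorem Continuous.krylovEnergy {X : Type*} [TopologicalSpace X] {n : ℕ} (ε : Fin n → ℝ)
    (N : Matrix (Fin n) (Fin n) ℝ) {M : X → Matrix (Fin n) (Fin n) ℝ} {x : X → Fin n → ℝ}
    (hM : Continuous M) (hx : Continuous x) :
    Continuous fun p => krylovEnergy ε N (M p) (x p) := by
  unfold _root_.krylovEnergy
  fun_prop

def ShizutaKawashima {m : Type*} [Fintype m] (N M : Matrix m m ℝ) : Prop :=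
  ∀ (φ : m → ℝ) (lam : ℝ), N.mulVec φ = 0 → lam • φ + M.mulVec φ = 0 → φ = 0

section krylovEnergy

variable {n : ℕ} {ε : Fin n → ℝ} {N : Matrix (Fin n) (Fin n) ℝ}

theorem krylovEnergy_nonneg (hε : ∀ k, 0 ≤ ε k) {M : Matrix (Fin n) (Fin n) ℝ} {x : Fin n → ℝ} :
    0 ≤ krylovEnergy ε N M x :=
  Finset.sum_nonneg fun k _ => mul_nonneg (hε k) (sq_nonneg _)

theorem krylovEnergy_eq_zero_iff (hε : ∀ k, 0 < ε k) {M : Matrix (Fin n) (Fin n) ℝ}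
    {x : Fin n → ℝ} : krylovEnergy ε N M x = 0 ↔ ∀ k : Fin n, (N * M ^ (k : ℕ)) *ᵥ x = 0 := by
  rw [krylovEnergy, Finset.sum_eq_zero_iff_of_nonneg fun k _ => by have := hε k; positivity]
  simp [(hε _).ne', eNorm_eq_norm]

theorem krylovEnergy_eq_zero_of_mulVec_eq_smul {M : Matrix (Fin n) (Fin n) ℝ} {x : Fin n → ℝ}
    {μ : ℝ} (hM : M *ᵥ x = μ • x) (hN : N *ᵥ x = 0) : krylovEnergy ε N M x = 0 :=
  Finset.sum_eq_zero fun k _ => by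
    rw [← mulVec_mulVec, M.pow_mulVec_eq_pow_smul hM, mulVec_smul, hN, smul_zero, eNorm_eq_norm,
      toLp_zero, norm_zero, zero_pow two_ne_zero, mul_zero]

variable (ε) in
theorem exists_krylovEnergy_eq_zero_of_not_shizutaKawashima {M : Matrix (Fin n) (Fin n) ℝ}
    (h : ¬ ShizutaKawashima N M) : ∃ x, ∑ i, x i ^ 2 = 1 ∧ krylovEnergy ε N M x = 0 := by
  simp only [ShizutaKawashima, not_forall] at h
  obtain ⟨φ, lam, hNφ, hMφ, hφ⟩ := h
  obtain ⟨c, hc⟩ := exists_smul_sum_sq_eq_one hφ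
  refine ⟨c • φ, hc, krylovEnergy_eq_zero_of_mulVec_eq_smul (μ := -lam) ?_ ?_⟩
  · rw [mulVec_smul, eq_neg_of_add_eq_zero_right hMφ, ← neg_smul, smul_comm]
  · rw [mulVec_smul, hNφ, smul_zero]

theorem krylovEnergy_pos (hε : ∀ k, 0 < ε k) {A B : Matrix (Fin n) (Fin n) ℝ} (hA : A.PosDef)
    (hB : B.IsHermitian) (hSK : ShizutaKawashima N (A⁻¹ * B)) {x : Fin n → ℝ} (hx : x ≠ 0) :
    0 < krylovEnergy ε N (A⁻¹ * B) x := by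
  refine (krylovEnergy_nonneg fun k => (hε k).le).lt_of_ne fun h0 => ?_
  obtain ⟨μ, φ, hφ, hMφ, hNφ⟩ := hA.exists_eigenvector_inv_mul_mem_ker hB N hx fun k hk => by
    rw [mulVec_mulVec]
    exact (krylovEnergy_eq_zero_iff hε).1 h0.symm ⟨k, by simpa using hk⟩
  exact hφ (hSK φ (-μ) hNφ (by rw [hMφ, neg_smul, neg_add_cancel]))

end krylovEnergy

/-- Positivity of the infimum `N̄ = inf { ∑_k ε_k |N M_ω^k x|² : |x| = 1, |ω| = 1 }`
(with `M_ω = (Ā⁰)⁻¹ ∑_j ω_j Ā^j`) is equivalent to the Shizuta–Kawashima condition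
for every direction `ω` on the unit sphere. -/
theorem stmt4 (d n : ℕ) (hd : 1 ≤ d) (hn : 1 ≤ n)
    (A0 : Matrix (Fin n) (Fin n) ℝ) (hA0 : A0.PosDef)
    (A : Fin d → Matrix (Fin n) (Fin n) ℝ) (hA : ∀ j, (A j).IsSymm)
    (N : Matrix (Fin n) (Fin n) ℝ)
    (ε : Fin n → ℝ) (hε : ∀ k, 0 < ε k) :
    (0 < sInf { s : ℝ | ∃ (x : Fin n → ℝ) (ω : Fin d → ℝ),
        (∑ i, (x i) ^ 2 = 1) ∧ (∑ j, (ω j) ^ 2 = 1) ∧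
        s = ∑ k : Fin n,
          ε k * (eNorm ((N * (A0⁻¹ * ∑ j, ω j • A j) ^ (k : ℕ)).mulVec x)) ^ 2 })
    ↔
    (∀ ω : Fin d → ℝ, (∑ j, (ω j) ^ 2 = 1) →
      ∀ (φ : Fin n → ℝ) (lam : ℝ), N.mulVec φ = 0 →
        lam • φ + (A0⁻¹ * ∑ j, ω j • A j).mulVec φ = 0 → φ = 0) := by
  set K := {x : Fin n → ℝ | ∑ i, x i ^ 2 = 1} ×ˢ {ω : Fin d → ℝ | ∑ j, ω j ^ 2 = 1}
  set F := fun p : (Fin n → ℝ) × (Fin d → ℝ) => krylovEnergy ε N (A0⁻¹ * ∑ j, p.2 j • A j) p.1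
  have hset : {s : ℝ | ∃ (x : Fin n → ℝ) (ω : Fin d → ℝ),
      (∑ i, (x i) ^ 2 = 1) ∧ (∑ j, (ω j) ^ 2 = 1) ∧
      s = ∑ k : Fin n,
        ε k * (eNorm ((N * (A0⁻¹ * ∑ j, ω j • A j) ^ (k : ℕ)).mulVec x)) ^ 2 } = F '' K := by
    ext s
    simp [K, F, krylovEnergy, eq_comm, and_assoc]
  have hB (ω : Fin d → ℝ) : (∑ j, ω j • A j).IsHermitian := by
    simp [IsSymm, transpose_sum, (hA _).eq]
  rw [hset]
  constructor
  · intro hpos ω hω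
    by_contra hSK
    obtain ⟨x, hx, h0⟩ := exists_krylovEnergy_eq_zero_of_not_shizutaKawashima ε hSK
    have hbdd : BddBelow (F '' K) :=
      ⟨0, by rintro _ ⟨p, -, rfl⟩; exact krylovEnergy_nonneg fun k => (hε k).le⟩
    exact hpos.not_ge (h0 ▸ csInf_le hbdd ⟨(x, ω), ⟨hx, hω⟩, rfl⟩)
  · intro hSK
    have : Nonempty (Fin n) := Fin.pos_iff_nonempty.1 hn
    have : Nonempty (Fin d) := Fin.pos_iff_nonempty.1 hd
    refine ((isCompact_setOf_sum_sq_eq_one _).prod (isCompact_setOf_sum_sq_eq_one _)).lt_csInf_image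
      ((nonempty_setOf_sum_sq_eq_one _).prod (nonempty_setOf_sum_sq_eq_one _))
      (Continuous.krylovEnergy ε N (by fun_prop) continuous_fst).continuousOn ?_
    rintro ⟨x, ω⟩ ⟨hx, hω⟩
    refine krylovEnergy_pos hε hA0 (hB ω) (hSK ω hω) ?_
    rintro rfl
    simp at hx
end

section
/- Let n ≥ 2, let M and N be n×n real matrices (viewed as acting on ℂⁿ), let ρ ∈ ℝ and let ε₁, …, ε_{n−1} be reals. Let z : ℝ → ℂⁿ be differentiable and satisfy z′(t) + iρ M z(t) + N z(t) = 0 for all t. Define I(t) := Σ_{k=1}^{n−1} ε_k Im⟨N M^{k−1} z(t), N M^k z(t)⟩, where ⟨u, v⟩ := Σ_j u_j \overline{v_j} is the Hermitian inner product on ℂⁿ. Then for every t, I′(t) + Σ_{k=1}^{n−1} ε_k ρ |N M^k z(t)|² = ρ Σ_{k=1}^{n−1} ε_k Re⟨N M^{k−1} z(t), N M^{k+1} z(t)⟩ − Σ_{k=1}^{n−1} ε_k Im⟨N M^{k−1} N z(t), N M^k z(t)⟩ − Σ_{k=1}^{n−1} ε_k Im⟨N M^{k−1} z(t), N M^k N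 z(t)⟩. -/
/-!
Differentiate each term `Im ⟨A z, A M z⟩`, `A = N M^(k-1)`, by the product rule and substitute
`z' = -iρ M z - N z`. The `M`-part of `z'` contributes `Im (-iρ |A M z|²) = -ρ |A M z|²` through the
left slot and, since conjugation in the right slot turns `-iρ` into `iρ`,
`Im (iρ ⟨A z, A M² z⟩) = ρ Re ⟨A z, A M² z⟩` through the right slot; the `N`-part gives the two
remaining terms.
-/

noncomputable def herm {n : ℕ} (u v : Fin n → ℂ) : ℂ :=
  ∑ j, u j * (starRingEnd ℂ) (v j)

noncomputable def cm {n : ℕ} (M : Matrix (Fin n) (Fin n) ℝ) :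
    Matrix (Fin n) (Fin n) ℂ :=
  M.map Complex.ofReal

section Herm

variable {n : ℕ}

lemma herm_sub_left (u w v : Fin n → ℂ) : herm (u - w) v = herm u v - herm w v := by
  simp [herm, sub_mul, Finset.sum_sub_distrib]

lemma herm_neg_left (u v : Fin n → ℂ) : herm (-u) v = -herm u v := by
  simp [herm]

lemma herm_smul_left (c : ℂ) (u v : Fin n → ℂ) : herm (c • u) v = c * herm u v := by
  simp [herm, Finset.mul_sum, mul_assoc]

lemma herm_sub_right (u v w : Fin n → ℂ) : herm u (v - w) = herm u v - herm u w := by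
  simp [herm, mul_sub, Finset.sum_sub_distrib]

lemma herm_neg_right (u v : Fin n → ℂ) : herm u (-v) = -herm u v := by
  simp [herm]

lemma herm_smul_right (c : ℂ) (u v : Fin n → ℂ) :
    herm u (c • v) = (starRingEnd ℂ) c * herm u v := by
  simp only [herm, Pi.smul_apply, smul_eq_mul, map_mul, Finset.mul_sum]
  exact Finset.sum_congr rfl fun _ _ => by ring

end Herm

open Matrix

section Deriv

variable {n : ℕ} {u v : ℝ → Fin n → ℂ} {u' v' : Fin n → ℂ} {t : ℝ}

theorem HasDerivAt.herm (hu : HasDerivAt u u' t) (hv : HasDerivAt v v' t) :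
    HasDerivAt (fun s => herm (u s) (v s)) (herm u' (v t) + herm (u t) v') t := by
  have hu_j := hasDerivAt_pi.mp hu
  have hv_j := hasDerivAt_pi.mp hv.star
  simp only [_root_.herm, ← Finset.sum_add_distrib]
  exact HasDerivAt.fun_sum fun j _ => (hu_j j).mul (hv_j j)

theorem HasDerivAt.matrix_mulVec {m ι : Type*} [Fintype m] [Fintype ι] (A : Matrix m ι ℂ)
    {w : ℝ → ι → ℂ} {w' : ι → ℂ} (hw : HasDerivAt w w' t) :
    HasDerivAt (fun s => A *ᵥ w s) (A *ᵥ w') t :=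
  ((mulVecLin A).restrictScalars ℝ).toContinuousLinearMap.hasFDerivAt.comp_hasDerivAt t hw

end Deriv

section Corrector

open Complex

variable {n : ℕ}

theorem herm_deriv_eq_of_solution (A M N : Matrix (Fin n) (Fin n) ℂ) (ρ : ℝ)
    (w w' : Fin n → ℂ) (hw : w' + (I * ρ) • M *ᵥ w + N *ᵥ w = 0) :
    herm (A *ᵥ w') ((A * M) *ᵥ w) + herm (A *ᵥ w) ((A * M) *ᵥ w') =
      -(I * ρ * herm ((A * M) *ᵥ w) ((A * M) *ᵥ w))
        + I * ρ * herm (A *ᵥ w) ((A * M * M) *ᵥ w)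
        - herm ((A * N) *ᵥ w) ((A * M) *ᵥ w) - herm (A *ᵥ w) ((A * M * N) *ᵥ w) := by
  obtain rfl : w' = -((I * ρ) • M *ᵥ w) - N *ᵥ w := by
    linear_combination (norm := module) hw
  simp only [mulVec_sub, mulVec_neg, mulVec_smul, mulVec_mulVec, herm_sub_left, herm_sub_right,
    herm_neg_left, herm_neg_right, herm_smul_left, herm_smul_right, map_mul, conj_I, conj_ofReal]
  ring

theorem hasDerivAt_im_herm_of_solution (A M N : Matrix (Fin n) (Fin n) ℂ) (ρ : ℝ)
    {z : ℝ → Fin n → ℂ} {z' : Fin n → ℂ} {t : ℝ} (hz : HasDerivAt z z' t)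
    (heq : z' + (I * ρ) • M *ᵥ z t + N *ᵥ z t = 0) :
    HasDerivAt (fun s => (herm (A *ᵥ z s) ((A * M) *ᵥ z s)).im)
      (-(ρ * (herm ((A * M) *ᵥ z t) ((A * M) *ᵥ z t)).re)
        + ρ * (herm (A *ᵥ z t) ((A * M * M) *ᵥ z t)).re
        - (herm ((A * N) *ᵥ z t) ((A * M) *ᵥ z t)).im
        - (herm (A *ᵥ z t) ((A * M * N) *ᵥ z t)).im) t := by
  have h := imCLM.hasFDerivAt.comp_hasDerivAt t
    ((hz.matrix_mulVec A).herm (hz.matrix_mulVec (A * M)))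
  refine h.congr_deriv ?_
  simp only [imCLM_apply, herm_deriv_eq_of_solution A M N ρ _ _ heq, sub_im, add_im, neg_im,
    mul_assoc, I_mul_im, re_ofReal_mul]

end Corrector

theorem stmt10_general (n : ℕ) (M N : Matrix (Fin n) (Fin n) ℝ)
    (ρ : ℝ) (ε : ℕ → ℝ)
    (z z' : ℝ → Fin n → ℂ)
    (hz : ∀ t, HasDerivAt z (z' t) t)
    (heq : ∀ t, z' t + (Complex.I * (ρ : ℂ)) • (cm M).mulVec (z t)
        + (cm N).mulVec (z t) = 0) :
    ∀ t : ℝ, HasDerivAt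
      (fun s => ∑ k ∈ Finset.Ico 1 n, ε k *
        (herm ((cm N * cm M ^ (k - 1)).mulVec (z s))
              ((cm N * cm M ^ k).mulVec (z s))).im)
      (-(∑ k ∈ Finset.Ico 1 n, ε k * ρ *
          (herm ((cm N * cm M ^ k).mulVec (z t))
                ((cm N * cm M ^ k).mulVec (z t))).re)
        + ρ * ∑ k ∈ Finset.Ico 1 n, ε k *
            (herm ((cm N * cm M ^ (k - 1)).mulVec (z t))
                  ((cm N * cm M ^ (k + 1)).mulVec (z t))).re
        - ∑ k ∈ Finset.Ico 1 n, ε k *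
            (herm ((cm N * cm M ^ (k - 1) * cm N).mulVec (z t))
                  ((cm N * cm M ^ k).mulVec (z t))).im
        - ∑ k ∈ Finset.Ico 1 n, ε k *
            (herm ((cm N * cm M ^ (k - 1)).mulVec (z t))
                  ((cm N * cm M ^ k * cm N).mulVec (z t))).im) t := by
  intro t
  have hmode : ∀ k ∈ Finset.Ico 1 n, HasDerivAt
      (fun s => ε k * (herm ((cm N * cm M ^ (k - 1)) *ᵥ z s) ((cm N * cm M ^ k) *ᵥ z s)).im)
      (ε k * (-(ρ * (herm ((cm N * cm M ^ k) *ᵥ z t) ((cm N * cm M ^ k) *ᵥ z t)).re)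
        + ρ * (herm ((cm N * cm M ^ (k - 1)) *ᵥ z t) ((cm N * cm M ^ (k + 1)) *ᵥ z t)).re
        - (herm ((cm N * cm M ^ (k - 1) * cm N) *ᵥ z t) ((cm N * cm M ^ k) *ᵥ z t)).im
        - (herm ((cm N * cm M ^ (k - 1)) *ᵥ z t) ((cm N * cm M ^ k * cm N) *ᵥ z t)).im)) t := by
    intro k hk
    have hshift : cm N * cm M ^ (k - 1) * cm M = cm N * cm M ^ k := by
      rw [mul_assoc, ← pow_succ, Nat.sub_add_cancel (Finset.mem_Ico.mp hk).1]
    have h := hasDerivAt_im_herm_of_solution (cm N * cm M ^ (k - 1)) (cm M) (cm N) ρ (hz t) (heq t)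
    rw [hshift, mul_assoc _ _ (cm M), ← pow_succ] at h
    exact h.const_mul (ε k)
  refine (HasDerivAt.fun_sum hmode).congr_deriv ?_
  simp only [Finset.mul_sum, ← Finset.sum_neg_distrib, ← Finset.sum_add_distrib,
    ← Finset.sum_sub_distrib]
  exact Finset.sum_congr rfl fun k _ => by ring

/-- Time derivative identity for the Beauchard–Zuazua corrector functional
`I(t) = ∑_{k=1}^{n-1} ε_k Im ⟨N M^{k-1} z, N M^k z⟩` along solutions of
`z' + iρ M z + N z = 0`. -/
theorem stmt10 (n : ℕ) (hn : 2 ≤ n) (M N : Matrix (Fin n) (Fin n) ℝ)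
    (ρ : ℝ) (ε : ℕ → ℝ)
    (z z' : ℝ → Fin n → ℂ)
    (hz : ∀ t, HasDerivAt z (z' t) t)
    (heq : ∀ t, z' t + (Complex.I * (ρ : ℂ)) • (cm M).mulVec (z t)
        + (cm N).mulVec (z t) = 0) :
    ∀ t : ℝ, HasDerivAt
      (fun s => ∑ k ∈ Finset.Ico 1 n, ε k *
        (herm ((cm N * cm M ^ (k - 1)).mulVec (z s))
              ((cm N * cm M ^ k).mulVec (z s))).im)
      (-(∑ k ∈ Finset.Ico 1 n, ε k * ρ *
          (herm ((cm N * cm M ^ k).mulVec (z t))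
                ((cm N * cm M ^ k).mulVec (z t))).re)
        + ρ * ∑ k ∈ Finset.Ico 1 n, ε k *
            (herm ((cm N * cm M ^ (k - 1)).mulVec (z t))
                  ((cm N * cm M ^ (k + 1)).mulVec (z t))).re
        - ∑ k ∈ Finset.Ico 1 n, ε k *
            (herm ((cm N * cm M ^ (k - 1) * cm N).mulVec (z t))
                  ((cm N * cm M ^ k).mulVec (z t))).im
        - ∑ k ∈ Finset.Ico 1 n, ε k *
            (herm ((cm N * cm M ^ (k - 1)).mulVec (z t))
                  ((cm N * cm M ^ k * cm N).mulVec (z t))).im) t :=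
  stmt10_general n M N ρ ε z z' hz heq
end

section
/- Let T > 0, let f : [0,T] → [0,∞) be continuous, let H : [0,T] → [0,∞) be Lebesgue integrable, and let κ > 0 and C > 0 be such that f(t) + κ ∫₀ᵗ H(τ) dτ ≤ f(0) + C ∫₀ᵗ H(τ) f(τ) dτ for all t ∈ [0,T]. If 4 C f(0) ≤ κ, then f(t) + (κ/2) ∫₀ᵗ H(τ) dτ ≤ f(0) for all t ∈ [0,T]. -/
open MeasureTheory Set

/-- Bootstrap argument: if `f ≥ 0` is continuous on `[0,T]`, `H ≥ 0` is integrable,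
`f t + κ ∫₀ᵗ H ≤ f 0 + C ∫₀ᵗ H f` on `[0,T]`, and `4 C f 0 ≤ κ`, then
`f t + (κ/2) ∫₀ᵗ H ≤ f 0` on `[0,T]`. -/
theorem stmt13 (T : ℝ) (hT : 0 < T) (f H : ℝ → ℝ)
    (hf : ContinuousOn f (Icc 0 T))
    (hfnonneg : ∀ t ∈ Icc (0 : ℝ) T, 0 ≤ f t)
    (hHint : IntegrableOn H (Icc 0 T))
    (hHnonneg : ∀ t ∈ Icc (0 : ℝ) T, 0 ≤ H t)
    (κ C : ℝ) (hκ : 0 < κ) (hC : 0 < C)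
    (hineq : ∀ t ∈ Icc (0 : ℝ) T,
      f t + κ * ∫ τ in (0 : ℝ)..t, H τ ≤ f 0 + C * ∫ τ in (0 : ℝ)..t, H τ * f τ)
    (hsmall : 4 * C * f 0 ≤ κ) :
    ∀ t ∈ Icc (0 : ℝ) T, f t + (κ / 2) * ∫ τ in (0 : ℝ)..t, H τ ≤ f 0 := by
  have hf0 : 0 ≤ f 0 := hfnonneg 0 ⟨le_rfl, hT.le⟩
  set M : ℝ := κ / (2 * C) with hM
  have hMpos : 0 < M := by positivity
  have hf0M : f 0 < M := by
    rw [hM, lt_div_iff₀ (by positivity)]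
    nlinarith
  have hCM : C * M = κ / 2 := by
    rw [hM]; field_simp
  -- nonnegativity of ∫ H
  have hInn : ∀ t ∈ Icc (0 : ℝ) T, 0 ≤ ∫ τ in (0 : ℝ)..t, H τ := by
    intro t ht
    exact intervalIntegral.integral_nonneg ht.1
      (fun u hu => hHnonneg u ⟨hu.1, hu.2.trans ht.2⟩)
  -- key estimate
  have key : ∀ t ∈ Icc (0 : ℝ) T, (∀ u ∈ Ico (0 : ℝ) t, f u ≤ M) →
      f t + (κ / 2) * ∫ τ in (0 : ℝ)..t, H τ ≤ f 0 := by
    intro t ht hb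
    have h0t : (0 : ℝ) ≤ t := ht.1
    have hsub : Icc (0 : ℝ) t ⊆ Icc 0 T := Icc_subset_Icc_right ht.2
    have hHt : IntegrableOn H (Icc 0 t) := hHint.mono_set hsub
    have hH1 : IntervalIntegrable H volume 0 t :=
      (intervalIntegrable_iff_integrableOn_Icc_of_le h0t).2 hHt
    have hHf : IntervalIntegrable (fun τ => H τ * f τ) volume 0 t :=
      (intervalIntegrable_iff_integrableOn_Icc_of_le h0t).2
        (hHt.mul_continuousOn (hf.mono hsub) isCompact_Icc)
    have hHM : IntervalIntegrable (fun τ => H τ * M) volume 0 t := hH1.mul_const M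
    have hae : (fun τ => H τ * f τ) ≤ᵐ[volume.restrict (Icc (0 : ℝ) t)]
        fun τ => H τ * M := by
      have h1 : ∀ᵐ τ ∂(volume.restrict (Icc (0 : ℝ) t)), τ ∈ Icc (0 : ℝ) t :=
        ae_restrict_mem measurableSet_Icc
      have h2' : ∀ᵐ τ ∂(volume : Measure ℝ), τ ≠ t := by
        rw [ae_iff]
        simpa [not_not] using measure_singleton t
      have h2 : ∀ᵐ τ ∂(volume.restrict (Icc (0 : ℝ) t)), τ ≠ t :=
        ae_restrict_of_ae h2'
      filter_upwards [h1, h2] with τ hτ hne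
      exact mul_le_mul_of_nonneg_left (hb τ ⟨hτ.1, lt_of_le_of_ne hτ.2 hne⟩)
        (hHnonneg τ (hsub hτ))
    have hmono : (∫ τ in (0 : ℝ)..t, H τ * f τ) ≤ ∫ τ in (0 : ℝ)..t, H τ * M :=
      intervalIntegral.integral_mono_ae_restrict h0t hHf hHM hae
    have heq : (∫ τ in (0 : ℝ)..t, H τ * M) = (∫ τ in (0 : ℝ)..t, H τ) * M :=
      intervalIntegral.integral_mul_const M H
    have hI : 0 ≤ ∫ τ in (0 : ℝ)..t, H τ := hInn t ht
    have hCJ : C * (∫ τ in (0 : ℝ)..t, H τ * f τ) ≤ κ / 2 * ∫ τ in (0 : ℝ)..t, H τ := by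
      have h1 : C * (∫ τ in (0 : ℝ)..t, H τ * f τ)
          ≤ C * ((∫ τ in (0 : ℝ)..t, H τ) * M) := by
        apply mul_le_mul_of_nonneg_left _ hC.le
        rw [← heq]; exact hmono
      calc C * (∫ τ in (0 : ℝ)..t, H τ * f τ)
          ≤ C * ((∫ τ in (0 : ℝ)..t, H τ) * M) := h1
        _ = (C * M) * ∫ τ in (0 : ℝ)..t, H τ := by ring
        _ = κ / 2 * ∫ τ in (0 : ℝ)..t, H τ := by rw [hCM]
    have := hineq t ht
    linarith
  -- main claim: f ≤ M on [0,T]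
  have main : ∀ t ∈ Icc (0 : ℝ) T, f t ≤ M := by
    by_contra h
    push_neg at h
    obtain ⟨t₁, ht₁, hgt⟩ := h
    set B : Set ℝ := Icc 0 T ∩ f ⁻¹' Ici M with hB
    have hBne : B.Nonempty := ⟨t₁, ht₁, hgt.le⟩
    have hBclosed : IsClosed B :=
      hf.preimage_isClosed_of_isClosed isClosed_Icc isClosed_Ici
    have hBbdd : BddBelow B := ⟨0, fun x hx => hx.1.1⟩
    have ht₀B : sInf B ∈ B := hBclosed.csInf_mem hBne hBbdd
    have ht₀ : sInf B ∈ Icc (0 : ℝ) T := ht₀B.1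
    have hb : ∀ u ∈ Ico (0 : ℝ) (sInf B), f u ≤ M := by
      intro u hu
      by_contra hcon
      push_neg at hcon
      have huB : u ∈ B := ⟨⟨hu.1, hu.2.le.trans ht₀.2⟩, hcon.le⟩
      exact absurd (csInf_le hBbdd huB) (not_le.2 hu.2)
    have hP := key (sInf B) ht₀ hb
    have hI := hInn (sInf B) ht₀
    have hMle : M ≤ f (sInf B) := ht₀B.2
    nlinarith
  intro t ht
  exact key t ht (fun u hu => main u ⟨hu.1, hu.2.le.trans ht.2⟩)
end
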